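/- arXiv:2605.29451 — 3 statements merged into one kernel-verified Lean document; each statement's English description precedes it below -/
import Mathlib

section
/- Let n ≥ 2 and let h : ℝ → ℝ be continuous, strictly positive, and even (h(−θ) = h(θ)). Set M := ∫_{−π/n}^{π/n} h(θ) dθ. Define the centroid functions C⁺(c) := (∫_{−π/n}^{c/2} θ h(θ) dθ) / (∫_{−π/n}^{c/2} h(θ) dθ) and C⁻(a) := (∫_{a/2}^{π/n} θ h(θ) dθ) / (∫_{a/2}^{π/n} h(θ) dθ). Then C⁺ is differentiable at c = 2π/n with derivative (C⁺)′(2π/n) = (π/(2n)) · h(π/n)/M, and C⁻ is differentiable at a = −2π/n with derivative (C⁻)′(−2π/n) = (π/(2n)) · h(π/n)/M. (These are the off-diagonal entries β = (π/(2nM)) h(π/n) of the Jacobian of the Lloyd map at the symmetric configuration: the derivative of the centroid of the Voronoi cell of the codepoint 0 with respect to the positions of its right neighbor at c and left neighbor at a.) -/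
/-!
By the quotient rule, moving the endpoint `u` of a cell moves its centroid `C` at rate
`f u * (u - C) / mass`. At the symmetric cell `(-π/n, π/n)` the centroid is `0` because `θ h θ`
is odd, so the rate is `h (π/n) * (π/n) / M`, halved because the cell ends at the midpoint `c / 2`.
The left endpoint reduces to the right one, since reversing the orientation of the interval
flips the sign of both integrals and leaves the centroid unchanged.
-/

open MeasureTheory intervalIntegral Real

noncomputable def centroid (f : ℝ → ℝ) (a b : ℝ) : ℝ :=
  (∫ θ in a..b, θ * f θ) / ∫ θ in a..b, f θ

lemma centroid_comm (f : ℝ → ℝ) (a b : ℝ) : centroid f a b = centroid f b a := by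
  simp only [centroid, integral_symm b a, neg_div_neg_eq]

lemma integral_neg_self_eq_zero_of_odd {g : ℝ → ℝ} (hodd : ∀ x, g (-x) = -g x) (a : ℝ) :
    ∫ θ in (-a)..a, g θ = 0 := by
  have hflip : ∫ θ in (-a)..a, g θ = -∫ θ in (-a)..a, g θ := by
    calc ∫ θ in (-a)..a, g θ = ∫ θ in (-a)..a, g (-θ) := by rw [integral_comp_neg, neg_neg]
      _ = -∫ θ in (-a)..a, g θ := by simp only [hodd, intervalIntegral.integral_neg]
  linarith

lemma centroid_neg_self_eq_zero {f : ℝ → ℝ} (heven : ∀ θ, f (-θ) = f θ) (a : ℝ) :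
    centroid f (-a) a = 0 := by
  have hodd : ∀ θ, -θ * f (-θ) = -(θ * f θ) := fun θ => by rw [heven]; ring
  rw [centroid, integral_neg_self_eq_zero_of_odd hodd, zero_div]

lemma hasDerivAt_centroid {f : ℝ → ℝ} (hf : Continuous f) {a u : ℝ}
    (hmass : ∫ θ in a..u, f θ ≠ 0) :
    HasDerivAt (centroid f a) (f u * (u - centroid f a u) / ∫ θ in a..u, f θ) u := by
  have hmoment : HasDerivAt (fun x => ∫ θ in a..x, θ * f θ) (u * f u) u :=
    integral_hasDerivAt_right ((continuous_id.mul hf).intervalIntegrable _ _)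
      (continuous_id.mul hf).aestronglyMeasurable.stronglyMeasurableAtFilter
      (continuous_id.mul hf).continuousAt
  have hmass' : HasDerivAt (fun x => ∫ θ in a..x, f θ) (f u) u :=
    integral_hasDerivAt_right (hf.intervalIntegrable _ _)
      hf.aestronglyMeasurable.stronglyMeasurableAtFilter hf.continuousAt
  refine (hmoment.div hmass' hmass).congr_deriv ?_
  rw [centroid]
  field_simp

theorem stmt_8 (n : ℕ) (hn : 2 ≤ n) (h : ℝ → ℝ) (hc : Continuous h)
    (hpos : ∀ θ : ℝ, 0 < h θ) (heven : ∀ θ : ℝ, h (-θ) = h θ)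
    (M : ℝ) (hM : M = ∫ θ in (-(Real.pi / n))..(Real.pi / n), h θ)
    (Cplus Cminus : ℝ → ℝ)
    (hCp : ∀ c : ℝ, Cplus c =
      (∫ θ in (-(Real.pi / n))..(c / 2), θ * h θ) /
      (∫ θ in (-(Real.pi / n))..(c / 2), h θ))
    (hCm : ∀ a : ℝ, Cminus a =
      (∫ θ in (a / 2)..(Real.pi / n), θ * h θ) /
      (∫ θ in (a / 2)..(Real.pi / n), h θ)) :
    HasDerivAt Cplus (Real.pi / (2 * n) * h (Real.pi / n) / M) (2 * Real.pi / n) ∧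
      HasDerivAt Cminus (Real.pi / (2 * n) * h (Real.pi / n) / M) (-(2 * Real.pi / n)) := by
  have hp : 0 < π / n := by positivity
  have hMpos : 0 < M :=
    hM ▸ intervalIntegral_pos_of_pos (hc.intervalIntegrable _ _) hpos (by linarith)
  have hright := hasDerivAt_centroid hc (a := -(π / n)) (u := π / n) (hM ▸ hMpos.ne')
  have hleft := hasDerivAt_centroid hc (a := π / n) (u := -(π / n))
    (by rw [integral_symm, ← hM]; exact neg_ne_zero.mpr hMpos.ne')
  rw [centroid_neg_self_eq_zero heven, ← hM] at hright
  rw [centroid_comm, centroid_neg_self_eq_zero heven, integral_symm, ← hM, heven] at hleft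
  constructor
  · rw [show Cplus = centroid h (-(π / n)) ∘ (· / 2) from funext hCp]
    refine (hright.comp_of_eq (2 * π / n) ((hasDerivAt_id' _).div_const 2) (by ring)).congr_deriv
      ?_
    field_simp
    ring
  · rw [show Cminus = centroid h (π / n) ∘ (· / 2) from
      funext fun a => (hCm a).trans (centroid_comm h _ _)]
    refine (hleft.comp_of_eq (-(2 * π / n)) ((hasDerivAt_id' _).div_const 2) (by ring)).congr_deriv
      ?_
    field_simp
    ring
end

section
/- Let n ≥ 2 and let h : ℝ → ℝ be continuous and strictly positive. Set M := ∫_{−π/n}^{π/n} h(θ) dθ, β := (π/(2nM)) h(π/n), and λ_m := 1 − 2β(1 − cos(2πm/n)) for integers m. Then |λ_m| < 1 for all integers m with 1 ≤ m ≤ n−1 if and only if (h(π/n)/M) · (π/n) < 2 / (1 − cos(2π⌊n/2⌋/n)). That is, the symmetric fixed point of the Lloyd map is linearly stable if and only if this inequality between the density at the Voronoi boundary and the cell mass holds. -/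
open MeasureTheory intervalIntegral Real

private lemma aux_half (n m : ℕ) (hn : 2 ≤ n) (hm1 : 1 ≤ m) (hm2 : 2 * m ≤ n) :
    Real.cos (2 * Real.pi * m / n) < 1 ∧
      Real.cos (2 * Real.pi * (n / 2 : ℕ) / n) ≤ Real.cos (2 * Real.pi * m / n) := by
  have hn0 : (0:ℝ) < n := by positivity
  have hpi := Real.pi_pos
  have hk2 : 2 * (n / 2) ≤ n := by omega
  have hmk : m ≤ n / 2 := by omega
  have hx0 : (0:ℝ) < 2 * Real.pi * m / n := by
    have : (1:ℝ) ≤ m := by exact_mod_cast hm1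
    positivity
  have hkle : 2 * Real.pi * (n / 2 : ℕ) / n ≤ Real.pi := by
    rw [div_le_iff₀ hn0]
    have : ((2 * (n / 2) : ℕ) : ℝ) ≤ (n : ℝ) := by exact_mod_cast hk2
    push_cast at this
    nlinarith
  have hmlek : 2 * Real.pi * m / n ≤ 2 * Real.pi * (n / 2 : ℕ) / n := by
    have : (m : ℝ) ≤ ((n / 2 : ℕ) : ℝ) := by exact_mod_cast hmk
    gcongr
  constructor
  · have := Real.cos_lt_cos_of_nonneg_of_le_pi (le_refl 0)
      (hmlek.trans hkle) hx0
    simpa using this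
  · exact Real.cos_le_cos_of_nonneg_of_le_pi hx0.le hkle hmlek

private lemma aux_cos (n m : ℕ) (hn : 2 ≤ n) (hm1 : 1 ≤ m) (hm2 : m ≤ n - 1) :
    Real.cos (2 * Real.pi * m / n) < 1 ∧
      Real.cos (2 * Real.pi * (n / 2 : ℕ) / n) ≤ Real.cos (2 * Real.pi * m / n) := by
  rcases le_or_gt (2 * m) n with hc | hc
  · exact aux_half n m hn hm1 hc
  · have hn0 : (0:ℝ) < n := by positivity
    have hmn : m ≤ n := by omega
    have hkey : 2 * Real.pi * m / n = 2 * Real.pi - 2 * Real.pi * ((n - m : ℕ) : ℝ) / n := by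
      have : ((n - m : ℕ) : ℝ) = (n : ℝ) - m := by
        push_cast [Nat.cast_sub hmn]; ring
      rw [this]; field_simp; ring
    rw [hkey, Real.cos_two_pi_sub]
    exact aux_half n (n - m) hn (by omega) (by omega)

theorem stmt_14 (n : ℕ) (hn : 2 ≤ n) (h : ℝ → ℝ) (hc : Continuous h)
    (hpos : ∀ θ : ℝ, 0 < h θ)
    (M : ℝ) (hM : M = ∫ θ in (-(Real.pi / n))..(Real.pi / n), h θ)
    (β : ℝ) (hβ : β = Real.pi / (2 * n * M) * h (Real.pi / n))
    (lam : ℕ → ℝ)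
    (hlam : ∀ m : ℕ, lam m = 1 - 2 * β * (1 - Real.cos (2 * Real.pi * m / n))) :
    (∀ m : ℕ, 1 ≤ m → m ≤ n - 1 → |lam m| < 1) ↔
      h (Real.pi / n) / M * (Real.pi / n) <
        2 / (1 - Real.cos (2 * Real.pi * (n / 2 : ℕ) / n)) := by
  have hpi := Real.pi_pos
  have hn0 : (0:ℝ) < n := by positivity
  have hπn : 0 < Real.pi / n := by positivity
  have hMpos : 0 < M := by
    rw [hM]
    exact intervalIntegral_pos_of_pos (hc.intervalIntegrable _ _) hpos (by linarith)
  have hβpos : 0 < β := by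
    rw [hβ]
    have := hpos (Real.pi / n)
    positivity
  have hkcos := aux_cos n (n / 2) hn (by omega) (by omega)
  have hcpos : 0 < 1 - Real.cos (2 * Real.pi * ((n / 2 : ℕ) : ℝ) / n) := by
    linarith [hkcos.1]
  have h2β : h (Real.pi / n) / M * (Real.pi / n) = 2 * β := by
    rw [hβ]; field_simp
  rw [h2β, lt_div_iff₀ hcpos]
  constructor
  · intro H
    have hH := H (n / 2) (by omega) (by omega)
    rw [hlam (n / 2), abs_lt] at hH
    linarith [hH.1]
  · intro H m hm1 hm2
    obtain ⟨hlt1, hle⟩ := aux_cos n m hn hm1 hm2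
    have hcm : 0 < 1 - Real.cos (2 * Real.pi * m / n) := by linarith
    have hcmc : 1 - Real.cos (2 * Real.pi * m / n)
        ≤ 1 - Real.cos (2 * Real.pi * ((n / 2 : ℕ) : ℝ) / n) := by linarith
    rw [hlam m, abs_lt]
    constructor
    · nlinarith [mul_le_mul_of_nonneg_left hcmc hβpos.le]
    · nlinarith [mul_pos hβpos hcm]
end

section
/- Let n ≥ 2 be even and let h : ℝ → ℝ be continuous and strictly positive. Set M := ∫_{−π/n}^{π/n} h(θ) dθ, β := (π/(2nM)) h(π/n), and λ_m := 1 − 2β(1 − cos(2πm/n)) for integers m. Then |λ_m| < 1 for all integers m with 1 ≤ m ≤ n−1 if and only if (π/n) · h(π/n) < M. (For n even the critical mode is m* = n/2, where cos(2πm*/n) = −1, so the stability threshold 2/(1 − cos(2πm*/n)) equals 1.) -/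
open MeasureTheory intervalIntegral Real

theorem stmt_15 (n : ℕ) (hn : 2 ≤ n) (heven : Even n)
    (h : ℝ → ℝ) (hc : Continuous h) (hpos : ∀ θ : ℝ, 0 < h θ)
    (M : ℝ) (hM : M = ∫ θ in (-(Real.pi / n))..(Real.pi / n), h θ)
    (β : ℝ) (hβ : β = Real.pi / (2 * n * M) * h (Real.pi / n))
    (lam : ℕ → ℝ)
    (hlam : ∀ m : ℕ, lam m = 1 - 2 * β * (1 - Real.cos (2 * Real.pi * m / n))) :
    (∀ m : ℕ, 1 ≤ m → m ≤ n - 1 → |lam m| < 1) ↔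
      Real.pi / n * h (Real.pi / n) < M := by
  have hπ := Real.pi_pos
  have hn0 : (0:ℝ) < n := by
    have : (2:ℝ) ≤ n := by exact_mod_cast hn
    linarith
  have hMpos : 0 < M := by
    rw [hM]
    apply intervalIntegral.intervalIntegral_pos_of_pos
      (hc.intervalIntegrable _ _) (fun x => hpos x)
    have : 0 < Real.pi / n := by positivity
    linarith
  have h2nM : (0:ℝ) < 2 * n * M := by positivity
  have hβpos : 0 < β := by
    rw [hβ]
    exact mul_pos (div_pos hπ h2nM) (hpos _)
  have key : β < 1/2 ↔ Real.pi / n * h (Real.pi / n) < M := by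
    rw [hβ, div_mul_eq_mul_div, div_lt_iff₀ h2nM,
      show Real.pi / ↑n * h (Real.pi / ↑n) = Real.pi * h (Real.pi / ↑n) / ↑n by ring,
      div_lt_iff₀ hn0]
    constructor <;> intro H <;> nlinarith [H]
  constructor
  · intro H
    have hm := H (n/2) (by omega) (by omega)
    rw [hlam] at hm
    have hc2 : ((n/2 : ℕ):ℝ) * 2 = n := by
      exact_mod_cast Nat.div_mul_cancel heven.two_dvd
    have hx : 2 * Real.pi * ((n/2 : ℕ):ℝ) / n = Real.pi := by
      rw [show 2 * Real.pi * ((n/2 : ℕ):ℝ) = Real.pi * (((n/2 : ℕ):ℝ) * 2) by ring,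
        hc2, mul_div_assoc, div_self (ne_of_gt hn0), mul_one]
    rw [hx, Real.cos_pi, abs_lt] at hm
    exact key.mp (by nlinarith [hm.1])
  · intro H m hm1 hm2
    have hβhalf := key.mpr H
    rw [hlam, abs_lt]
    have hm0 : (0:ℝ) < m := by exact_mod_cast hm1
    have hmn : (m:ℝ) < n := by exact_mod_cast (by omega : m < n)
    set x := 2 * Real.pi * m / n with hxdef
    have hx0 : 0 < x := by positivity
    have hxlt : x < 2 * Real.pi := by
      rw [hxdef, div_lt_iff₀ hn0]
      nlinarith
    have hcos_lt : Real.cos x < 1 := by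
      rcases lt_or_eq_of_le (Real.cos_le_one x) with h1 | h1
      · exact h1
      · exfalso
        have := (Real.cos_eq_one_iff_of_lt_of_lt (by linarith) hxlt).mp h1
        linarith
    have hcos_ge : -1 ≤ Real.cos x := Real.neg_one_le_cos x
    have hprod : 0 < β * (1 - Real.cos x) :=
      mul_pos hβpos (by linarith)
    constructor
    · nlinarith [mul_lt_mul_of_pos_right hβhalf (show (0:ℝ) < 1 - Real.cos x by linarith)]
    · linarith
end
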